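/- Let Y be an integrable continuous random variable and X a random variable with continuous conditional distribution of Y given X, and assume CTE_α(Y) > E[Y] for α ∈ (0,1). Then the quantile contrast index satisfies 0 ≤ S^α_X ≤ 1, equivalently E[Y] ≤ E[Y | Y > F^{-1}_{Y|X}(α)] ≤ CTE_α(Y). -/

import Mathlib

open MeasureTheory ProbabilityTheory Real Set Filter
open scoped Topology

/-- Generalized inverse (quantile function): `F⁻¹(α) = inf {y : F(y) ≥ α}`. -/
noncomputable def quantileFun {Ω : Type*} [MeasurableSpace Ω] (μ : Measure Ω)
    (Y : Ω → ℝ) (α : ℝ) : ℝ :=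
  sInf {y : ℝ | α ≤ (μ {ω | Y ω ≤ y}).toReal}

/-- The α-quantile contrast (pinball) function `ψ_α(y, θ) = (y-θ)(α - 1_{y≤θ})`. -/
noncomputable def psi (α y θ : ℝ) : ℝ := (y - θ) * (α - if y ≤ θ then 1 else 0)

/-- Conditional Tail Expectation: `E[Y | Y > F_Y⁻¹(α)]`. -/
noncomputable def CTE {Ω : Type*} [MeasurableSpace Ω] (μ : Measure Ω)
    (Y : Ω → ℝ) (α : ℝ) : ℝ :=
  (∫ ω in {ω | quantileFun μ Y α < Y ω}, Y ω ∂μ) /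
    (μ {ω | quantileFun μ Y α < Y ω}).toReal

/-! With `T = {θ₂ < Y}`, pulling the `m`-measurable factor out of the conditional expectation
turns the hypothesis on `μ[1_{Y ≤ θ₂} | m]` into `∫_T g = (1 - α) ∫ g` for every integrable
`m`-measurable `g`; in particular `μ T = 1 - α`, which is also `μ {q < Y}` for the quantile `q`
since the distribution function of `Y` is continuous. The lower bound is `E[ψ_α(Y; θ₂)] ≥ 0`,
which by this balance of `θ₂` on `T` reads `(1 - α) E[Y] ≤ ∫_T Y`. The upper bound holds because
among sets `A` of a given measure the level set `{q < Y}` maximises `∫_A Y`, as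
`(1_A - 1_{q < Y}) (Y - q) ≤ 0` pointwise. -/

lemma psi_nonneg {α : ℝ} (h0 : 0 ≤ α) (h1 : α ≤ 1) (y θ : ℝ) : 0 ≤ psi α y θ := by
  unfold psi
  split_ifs <;> nlinarith

lemma psi_eq_indicator_sub (α y θ : ℝ) :
    psi α y θ = {x | θ < x}.indicator (fun x => x - θ) y - (1 - α) * (y - θ) := by
  unfold psi indicator
  split_ifs with hle hlt hlt
  · exact absurd hlt (not_lt.mpr hle)
  · ring
  · ring
  · exact absurd (le_of_not_gt hlt) hle

section Integrals

variable {Ω : Type*} [MeasurableSpace Ω] {μ : Measure Ω}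

lemma integral_psi {Y θ : Ω → ℝ} (hY : Integrable Y μ) (hθ : Integrable θ μ)
    (hT : NullMeasurableSet {ω | θ ω < Y ω} μ) (α : ℝ) :
    ∫ ω, psi α (Y ω) (θ ω) ∂μ = ∫ ω in {ω | θ ω < Y ω}, Y ω ∂μ
      - ∫ ω in {ω | θ ω < Y ω}, θ ω ∂μ - (1 - α) * (∫ ω, Y ω ∂μ - ∫ ω, θ ω ∂μ) := by
  have hYθ : Integrable (fun ω => Y ω - θ ω) μ := hY.sub hθ
  have hind : (fun ω => psi α (Y ω) (θ ω))
      = fun ω => {ω | θ ω < Y ω}.indicator (fun ω => Y ω - θ ω) ω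
          - (1 - α) * (Y ω - θ ω) := by
    funext ω
    rw [psi_eq_indicator_sub]
    by_cases h : θ ω < Y ω <;> simp [h]
  rw [hind, integral_sub (hYθ.indicator₀ hT) (hYθ.const_mul _), integral_indicator₀ hT,
    integral_const_mul, integral_sub hY.integrableOn hθ.integrableOn, integral_sub hY hθ]

lemma mul_integral_le_setIntegral_lt {Y θ : Ω → ℝ} (hY : Integrable Y μ) (hθ : Integrable θ μ)
    (hT : NullMeasurableSet {ω | θ ω < Y ω} μ) {α : ℝ} (h0 : 0 ≤ α) (h1 : α ≤ 1)
    (hθT : ∫ ω in {ω | θ ω < Y ω}, θ ω ∂μ = (1 - α) * ∫ ω, θ ω ∂μ) :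
    (1 - α) * ∫ ω, Y ω ∂μ ≤ ∫ ω in {ω | θ ω < Y ω}, Y ω ∂μ := by
  have hψ : 0 ≤ ∫ ω, psi α (Y ω) (θ ω) ∂μ := integral_nonneg fun ω => psi_nonneg h0 h1 _ _
  rw [integral_psi hY hθ hT, hθT] at hψ
  linarith

lemma setIntegral_le_setIntegral_lt_of_measureReal_eq [IsFiniteMeasure μ] {Y : Ω → ℝ}
    (hY : Integrable Y μ) {A : Set Ω} {q : ℝ} (hA : NullMeasurableSet A μ)
    (hT : NullMeasurableSet {ω | q < Y ω} μ) (hμ : μ.real A = μ.real {ω | q < Y ω}) :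
    ∫ ω in A, Y ω ∂μ ≤ ∫ ω in {ω | q < Y ω}, Y ω ∂μ := by
  have hYq : Integrable (fun ω => Y ω - q) μ := hY.sub (integrable_const q)
  have hmono : ∫ ω in A, (Y ω - q) ∂μ ≤ ∫ ω in {ω | q < Y ω}, (Y ω - q) ∂μ := by
    rw [← integral_indicator₀ hA, ← integral_indicator₀ hT]
    refine integral_mono (hYq.indicator₀ hA) (hYq.indicator₀ hT) fun ω => ?_
    by_cases hω : q < Y ω <;> by_cases hωA : ω ∈ A <;>
      simp only [indicator, mem_ofPred_eq, hω, hωA, if_true, if_false] <;> linarith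
  rw [integral_sub hY.integrableOn (integrable_const q).integrableOn,
    integral_sub hY.integrableOn (integrable_const q).integrableOn,
    setIntegral_const, setIntegral_const, hμ] at hmono
  linarith

end Integrals

lemma apply_sInf_setOf_le_eq {F : ℝ → ℝ} (hF : Continuous F) {α : ℝ}
    (hne : ∃ y, α ≤ F y) (hbdd : BddBelow {y | α ≤ F y}) :
    F (sInf {y | α ≤ F y}) = α := by
  set q := sInf {y | α ≤ F y}
  have hle : F q ≤ α := by
    refine le_of_tendsto (hF.continuousAt.tendsto.mono_left (nhdsWithin_le_nhds (s := Iio q)))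
      (eventually_nhdsWithin_of_forall fun y hy => ?_)
    exact (not_le.mp (notMem_of_lt_csInf (s := {y | α ≤ F y}) hy hbdd)).le
  exact le_antisymm hle ((isClosed_le continuous_const hF).csInf_mem hne hbdd)

section Probability

variable {Ω : Type*} [MeasurableSpace Ω] {μ : Measure Ω} [IsProbabilityMeasure μ]

lemma measureReal_le_quantileFun {Y : Ω → ℝ} (hY : AEMeasurable Y μ)
    (hF : Continuous fun y : ℝ => (μ {ω | Y ω ≤ y}).toReal) {α : ℝ} (hα : α ∈ Ioo (0 : ℝ) 1) :
    μ.real {ω | Y ω ≤ quantileFun μ Y α} = α := by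
  have : IsProbabilityMeasure (μ.map Y) := Measure.isProbabilityMeasure_map hY
  have hcdf (y : ℝ) : (μ {ω | Y ω ≤ y}).toReal = cdf (μ.map Y) y := by
    rw [cdf_eq_real, measureReal_def, Measure.map_apply_of_aemeasurable hY measurableSet_Iic]
    rfl
  have hne : ∃ y, α ≤ (μ {ω | Y ω ≤ y}).toReal := by
    simp only [hcdf]
    exact ((tendsto_cdf_atTop _).eventually (eventually_ge_nhds hα.2)).exists
  have hbdd : BddBelow {y | α ≤ (μ {ω | Y ω ≤ y}).toReal} := by
    obtain ⟨y₀, hy₀⟩ := eventually_atBot.mp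
      ((tendsto_cdf_atBot _).eventually (eventually_lt_nhds hα.1))
    simp only [hcdf]
    exact ⟨y₀, fun y hy => le_of_not_gt fun hlt => (hy₀ y hlt.le).not_ge hy⟩
  exact apply_sInf_setOf_le_eq hF hne hbdd

lemma measureReal_quantileFun_lt {Y : Ω → ℝ} (hY : AEMeasurable Y μ)
    (hF : Continuous fun y : ℝ => (μ {ω | Y ω ≤ y}).toReal) {α : ℝ} (hα : α ∈ Ioo (0 : ℝ) 1) :
    μ.real {ω | quantileFun μ Y α < Y ω} = 1 - α := by
  have hcompl : {ω | quantileFun μ Y α < Y ω} = {ω | Y ω ≤ quantileFun μ Y α}ᶜ := by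
    ext ω; simp
  rw [hcompl, probReal_compl_eq_one_sub₀ (nullMeasurableSet_le hY aemeasurable_const),
    measureReal_le_quantileFun hY hF hα]

end Probability

section Conditional

variable {Ω : Type*} {m : MeasurableSpace Ω} [mΩ : MeasurableSpace Ω] {μ : Measure Ω}
  [IsFiniteMeasure μ]

lemma setIntegral_eq_mul_integral_of_condExp_indicator (hm : m ≤ mΩ) {S : Set Ω}
    (hS : NullMeasurableSet S μ) {α : ℝ}
    (hcond : ∀ᵐ ω ∂μ, (μ[S.indicator (fun _ => (1 : ℝ)) | m]) ω = α)
    {g : Ω → ℝ} (hg : StronglyMeasurable[m] g) (hgi : Integrable g μ) :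
    ∫ ω in S, g ω ∂μ = α * ∫ ω, g ω ∂μ := by
  have hgS : g * S.indicator (fun _ => (1 : ℝ)) = S.indicator g := by
    funext ω
    by_cases h : ω ∈ S <;> simp [h]
  have hpull := condExp_mul_of_stronglyMeasurable_left hg (hgS ▸ hgi.indicator₀ hS)
    ((integrable_const (1 : ℝ)).indicator₀ hS)
  calc ∫ ω in S, g ω ∂μ = ∫ ω, (g * S.indicator (fun _ => (1 : ℝ))) ω ∂μ := by
        rw [hgS, integral_indicator₀ hS]
    _ = ∫ ω, (μ[g * S.indicator (fun _ => (1 : ℝ)) | m]) ω ∂μ := (integral_condExp hm).symm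
    _ = ∫ ω, g ω * α ∂μ := integral_congr_ae <| by
        filter_upwards [hpull, hcond] with ω h1 h2
        rw [h1, Pi.mul_apply, h2]
    _ = α * ∫ ω, g ω ∂μ := by rw [integral_mul_const, mul_comm]

lemma setIntegral_compl_eq_mul_integral_of_condExp_indicator (hm : m ≤ mΩ) {S : Set Ω}
    (hS : NullMeasurableSet S μ) {α : ℝ}
    (hcond : ∀ᵐ ω ∂μ, (μ[S.indicator (fun _ => (1 : ℝ)) | m]) ω = α)
    {g : Ω → ℝ} (hg : StronglyMeasurable[m] g) (hgi : Integrable g μ) :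
    ∫ ω in Sᶜ, g ω ∂μ = (1 - α) * ∫ ω, g ω ∂μ := by
  have := integral_add_compl₀ hS hgi
  rw [setIntegral_eq_mul_integral_of_condExp_indicator hm hS hcond hg hgi] at this
  linarith

end Conditional

lemma one_sub_div_sub_mem_Icc {a x y : ℝ} (hax : a ≤ x) (hxy : x ≤ y) (hay : a < y) :
    0 ≤ 1 - (x - a) / (y - a) ∧ 1 - (x - a) / (y - a) ≤ 1 := by
  have hya : 0 < y - a := sub_pos.mpr hay
  constructor
  · linarith [(div_le_one hya).mpr (sub_le_sub_right hxy a)]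
  · linarith [div_nonneg (sub_nonneg.mpr hax) hya.le]

/-- The quantile contrast index lies in `[0,1]`; equivalently
`E[Y] ≤ E[Y | Y > F⁻¹_{Y|X}(α)] ≤ CTE_α(Y)`. Here `m` plays the role of `σ(X)` and
`θ₂` is the conditional α-quantile of `Y` given `X`. -/
theorem qosa_between_zero_and_one {Ω : Type*} [mΩ : MeasurableSpace Ω]
    (μ : Measure Ω) [IsProbabilityMeasure μ]
    (m : MeasurableSpace Ω) (hm : m ≤ mΩ)
    (Y θ₂ : Ω → ℝ) (hθ₂ : StronglyMeasurable[m] θ₂)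
    (hYint : Integrable Y μ) (hθ₂int : Integrable θ₂ μ)
    (hFcont : Continuous fun y : ℝ => (μ {ω | Y ω ≤ y}).toReal)
    (α : ℝ) (hα : α ∈ Set.Ioo (0 : ℝ) 1)
    (hcond : ∀ᵐ ω ∂μ,
      (μ[Set.indicator {ω' | Y ω' ≤ θ₂ ω'} (fun _ => (1 : ℝ)) | m]) ω = α)
    (hCTE : ∫ ω, Y ω ∂μ < @CTE Ω mΩ μ Y α) :
    (∫ ω, Y ω ∂μ
        ≤ (∫ ω in {ω | θ₂ ω < Y ω}, Y ω ∂μ) / (μ {ω | θ₂ ω < Y ω}).toReal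
      ∧ (∫ ω in {ω | θ₂ ω < Y ω}, Y ω ∂μ) / (μ {ω | θ₂ ω < Y ω}).toReal
        ≤ @CTE Ω mΩ μ Y α)
    ∧ 0 ≤ 1 - ((∫ ω in {ω | θ₂ ω < Y ω}, Y ω ∂μ) / (μ {ω | θ₂ ω < Y ω}).toReal
          - ∫ ω, Y ω ∂μ) / (@CTE Ω mΩ μ Y α - ∫ ω, Y ω ∂μ)
    ∧ 1 - ((∫ ω in {ω | θ₂ ω < Y ω}, Y ω ∂μ) / (μ {ω | θ₂ ω < Y ω}).toReal
          - ∫ ω, Y ω ∂μ) / (@CTE Ω mΩ μ Y α - ∫ ω, Y ω ∂μ) ≤ 1 := by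
  -- the binder `m` comes after `mΩ` and would otherwise be the ambient instance
  let := mΩ
  have hY : AEMeasurable Y μ := hYint.aemeasurable
  have hS : NullMeasurableSet {ω | Y ω ≤ θ₂ ω} μ :=
    nullMeasurableSet_le hY (hθ₂.mono hm).measurable.aemeasurable
  have hT : {ω | θ₂ ω < Y ω} = {ω | Y ω ≤ θ₂ ω}ᶜ := by ext ω; simp
  have hθT : ∫ ω in {ω | θ₂ ω < Y ω}, θ₂ ω ∂μ = (1 - α) * ∫ ω, θ₂ ω ∂μ := by
    rw [hT]
    exact setIntegral_compl_eq_mul_integral_of_condExp_indicator hm hS hcond hθ₂ hθ₂int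
  have hμT : μ.real {ω | θ₂ ω < Y ω} = 1 - α := by
    simpa [hT] using setIntegral_compl_eq_mul_integral_of_condExp_indicator hm hS hcond
      stronglyMeasurable_const (integrable_const (1 : ℝ))
  have hμq := measureReal_quantileFun_lt hY hFcont hα
  have hlow := mul_integral_le_setIntegral_lt hYint hθ₂int (hT ▸ hS.compl) hα.1.le hα.2.le hθT
  have hup := setIntegral_le_setIntegral_lt_of_measureReal_eq hYint (hT ▸ hS.compl)
    (nullMeasurableSet_lt aemeasurable_const hY) (hμT.trans hμq.symm)
  unfold CTE at hCTE ⊢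
  simp only [← measureReal_def, hμT, hμq] at hCTE ⊢
  have hp : 0 < 1 - α := sub_pos.mpr hα.2
  have hlow' := (le_div_iff₀' hp).mpr hlow
  have hup' := div_le_div_of_nonneg_right hup hp.le
  exact ⟨⟨hlow', hup'⟩, one_sub_div_sub_mem_Icc hlow' hup' hCTE⟩
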